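/- arXiv:2407.15001 — 2 statements merged into one kernel-verified Lean document; each statement's English description precedes it below -/
import Mathlib

section
/- For i ∈ {1,…,p} define the polynomial L^{(i)}(x) = [(−1)^{|n⃗|−1} / ((n_i−1)! · ∏_{k≠i}(α_k−α_i)_{n_k} · Γ(α_i+1))] · ∑_{l=0}^{n_i−1} [(−n_i+1)_l ∏_{k≠i}(α_i+1−α_k−n_k)_l] / [(α_i+1)_l ∏_{k≠i}(α_i+1−α_k)_l] · x^l/l!. Then ∑_{i=1}^p ∫_0^∞ x^j L^{(i)}(x) x^{α_i} e^{−x} dx = 0 for every j ∈ {0,…,|n⃗|−2}, and = 1 for j = |n⃗|−1. -/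
/-! Integrating `x ^ l` against `x ^ α_i e^{-x}` gives `Γ(α_i + l + 1)`, and
`Γ(α_i + j + m + 1) = (α_i + m + 1)_j Γ(α_i + m + 1)`. The coefficient `c_{i,m}` of `x ^ m` in
`L^{(i)}` is such that `c_{i,m} Γ(α_i + m + 1)` is the barycentric weight
`1 / ∏_{τ ≠ (i,m)} (v_{i,m} - v_τ)` of the node `v_{i,m} = α_i + m` among all `|n⃗|` nodes
`α_k + m'`, `m' < n_k`; these are distinct because no two `α_i` differ by an integer. So the `j`-th
moment is the divided difference of `t ↦ (t + 1)_j` at these nodes, i.e. the coefficient of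
`t ^ (|n⃗| - 1)` in this monic polynomial of degree `j`. -/

open Finset MeasureTheory

/-- The Pochhammer symbol (rising factorial) `(a)_m` for a real number `a`. -/
noncomputable def poch (a : ℝ) (m : ℕ) : ℝ := (ascPochhammer ℝ m).eval a

open Polynomial
open scoped Nat

lemma poch_succ (a : ℝ) (m : ℕ) : poch a (m + 1) = poch a m * (a + m) :=
  ascPochhammer_succ_eval m a

lemma poch_add (a : ℝ) (m l : ℕ) : poch a (m + l) = poch a m * poch (a + m) l := by
  simpa [poch, eval_comp] using congrArg (eval a) (ascPochhammer_mul ℝ m l).symm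

lemma poch_one (m : ℕ) : poch 1 m = m ! := ascPochhammer_eval_one ℝ m

lemma poch_neg (a : ℝ) (N : ℕ) : poch (-a) N = (-1) ^ N * ∏ j ∈ range N, (a - j) := by
  rw [poch, ascPochhammer_eval_neg_eq_descPochhammer, descPochhammer_eval_eq_prod_range]

lemma prod_range_sub_eq_poch (t : ℝ) (N : ℕ) : ∏ j ∈ range N, (t - j) = poch (t - N + 1) N := by
  rw [← descPochhammer_eval_eq_prod_range, descPochhammer_eval_eq_ascPochhammer, poch]

lemma poch_ne_zero {a : ℝ} (ha : ∀ k : ℕ, a ≠ -k) (N : ℕ) : poch a N ≠ 0 := fun h => by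
  obtain ⟨k, -, hk⟩ := (ascPochhammer_eval_eq_zero_iff N a).1 h
  exact ha k (by linarith)

lemma poch_pos {a : ℝ} (ha : 0 < a) (N : ℕ) : 0 < poch a N := ascPochhammer_pos N a ha

lemma Real.Gamma_add_natCast {a : ℝ} (ha : 0 < a) (m : ℕ) :
    Real.Gamma (a + m) = poch a m * Real.Gamma a := by
  induction m with
  | zero => simp [poch]
  | succ m ih =>
    rw [Nat.cast_succ, ← add_assoc, Real.Gamma_add_one (by positivity), ih, poch_succ]
    ring

lemma poch_neg_natCast (N m : ℕ) : poch (-N) m = (-1) ^ m * N.descFactorial m := by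
  rw [poch, ascPochhammer_eval_neg_eq_descPochhammer, descPochhammer_eval_eq_descFactorial]

lemma prod_range_erase_natCast_sub {N m : ℕ} (hm : m < N) :
    ∏ j ∈ (range N).erase m, ((m : ℝ) - j) = (-1) ^ (N - 1 - m) * ((N - 1 - m) ! * m !) := by
  have hsplit : (range N).erase m = range m ∪ (Ico (m + 1) N) := by
    ext j; simp only [mem_erase, mem_range, mem_union, mem_Ico]; omega
  have hdisj : Disjoint (range m) (Ico (m + 1) N) :=
    disjoint_left.2 fun j hj hj' => by simp only [mem_range, mem_Ico] at hj hj'; omega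
  have hbelow : ∏ j ∈ range m, ((m : ℝ) - j) = m ! := by
    rw [prod_range_sub_eq_poch, sub_self, zero_add, poch_one]
  have habove : ∏ j ∈ Ico (m + 1) N, ((m : ℝ) - j) = (-1) ^ (N - 1 - m) * (N - 1 - m) ! := by
    have hneg := poch_neg (-1) (N - 1 - m)
    rw [neg_neg, poch_one] at hneg
    rw [prod_Ico_eq_prod_range, show N - (m + 1) = N - 1 - m by omega, hneg, ← mul_assoc,
      ← pow_add, ← two_mul, pow_mul, neg_one_sq, one_pow, one_mul]
    refine prod_congr rfl fun j _ => ?_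
    push_cast; ring
  rw [hsplit, prod_union hdisj, hbelow, habove]; ring

lemma neg_one_pow_mul_poch_div_factorial {N m : ℕ} (hm : m < N) :
    (-1) ^ (N - 1) * poch (-N + 1) m / ((N - 1) ! * m !)
      = (∏ j ∈ (range N).erase m, ((m : ℝ) - j))⁻¹ := by
  have hpoch : poch (-N + 1) m * (N - 1 - m) ! = (-1) ^ m * (N - 1) ! := by
    rw [show -(N : ℝ) + 1 = -((N - 1 : ℕ) : ℝ) by push_cast [Nat.one_le_of_lt hm]; ring,
      poch_neg_natCast, mul_assoc, ← Nat.cast_mul, mul_comm (Nat.descFactorial _ _),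
      Nat.factorial_mul_descFactorial (by omega)]
  refine eq_inv_of_mul_eq_one_left ?_
  rw [prod_range_erase_natCast_sub hm]
  have hsign : (-1 : ℝ) ^ (N - 1) * (-1) ^ m * (-1) ^ (N - 1 - m) = 1 := by
    rw [← pow_add, ← pow_add, show N - 1 + m + (N - 1 - m) = 2 * (N - 1) by omega, pow_mul,
      neg_one_sq, one_pow]
  field_simp
  linear_combination (-1 : ℝ) ^ (N - 1) * (-1) ^ (N - 1 - m) * hpoch + (N - 1) ! * hsign

lemma neg_one_pow_mul_poch_div_poch_mul_poch {a b : ℝ} (hab : ∀ z : ℤ, a - b ≠ z) (N m : ℕ) :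
    (-1) ^ N * poch (a + 1 - b - N) m / (poch (b - a) N * poch (a + 1 - b) m)
      = (∏ j ∈ range N, (a + m - (b + j)))⁻¹ := by
  have hprod : ∏ j ∈ range N, (a + m - (b + j)) = poch (a + 1 - b - N + m) N := by
    rw [prod_congr rfl fun (j : ℕ) _ => show a + m - (b + j) = a - b + m - j by ring,
      prod_range_sub_eq_poch]
    congr 1; ring
  have hshift : poch (a + 1 - b - N) m * poch (a + 1 - b - N + m) N
      = poch (a + 1 - b - N) N * poch (a + 1 - b) m := by
    rw [← poch_add, add_comm m N, poch_add, show a + 1 - b - N + N = a + 1 - b by ring]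
  have hreflect : poch (b - a) N = (-1) ^ N * poch (a + 1 - b - N) N := by
    rw [← neg_sub, poch_neg, prod_range_sub_eq_poch]
    congr 2; ring
  have hba : poch (b - a) N ≠ 0 := poch_ne_zero (fun k h => hab k (by push_cast; linarith)) N
  have hab1 : poch (a + 1 - b) m ≠ 0 :=
    poch_ne_zero (fun k h => hab (-(k + 1)) (by push_cast; linarith)) m
  refine eq_inv_of_mul_eq_one_left ?_
  rw [hprod, div_mul_eq_mul_div, div_eq_one_iff_eq (mul_ne_zero hba hab1), mul_assoc, hshift,
    hreflect, mul_assoc]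

lemma eval_ascPochhammer_comp_X_add_one (j : ℕ) (t : ℝ) :
    ((ascPochhammer ℝ j).comp (X + C 1)).eval t = poch (t + 1) j := by
  simp [poch, eval_comp]

lemma natDegree_ascPochhammer_comp_X_add_one (j : ℕ) :
    ((ascPochhammer ℝ j).comp (X + C 1)).natDegree = j := by
  rw [natDegree_comp, ascPochhammer_natDegree, natDegree_X_add_C, mul_one]

lemma monic_ascPochhammer_comp_X_add_one (j : ℕ) : ((ascPochhammer ℝ j).comp (X + C 1)).Monic :=
  (monic_ascPochhammer ℝ j).comp_X_add_C 1

lemma Finset.prod_sigma_erase {ι M : Type*} {κ : ι → Type*} [DecidableEq ι] [∀ i, DecidableEq (κ i)]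
    [CommMonoid M] {s : Finset ι} (t : (i : ι) → Finset (κ i)) {i : ι} (hi : i ∈ s) (m : κ i)
    (f : (Σ i, κ i) → M) :
    ∏ x ∈ (s.sigma t).erase ⟨i, m⟩, f x
      = (∏ j ∈ (t i).erase m, f ⟨i, j⟩) * ∏ k ∈ s.erase i, ∏ j ∈ t k, f ⟨k, j⟩ := by
  have herase : (s.sigma t).erase ⟨i, m⟩ = s.sigma (Function.update t i ((t i).erase m)) := by
    ext ⟨k, j⟩
    by_cases hk : k = i
    · subst hk; simp [and_left_comm]
    · simp [hk]
  rw [herase, prod_sigma, ← mul_prod_erase s _ hi, Function.update_self]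
  congr 1
  exact prod_congr rfl fun k hk => by rw [Function.update_of_ne (ne_of_mem_erase hk)]

lemma integral_pow_mul_sum_mul_rpow_mul_exp {a : ℝ} (ha : -1 < a) (j : ℕ) (s : Finset ℕ)
    (c : ℕ → ℝ) :
    ∫ x in Set.Ioi 0, x ^ j * (∑ l ∈ s, c l * x ^ l) * x ^ a * Real.exp (-x)
      = ∑ l ∈ s, c l * Real.Gamma (a + j + l + 1) := by
  have hpos : ∀ l : ℕ, 0 < a + j + l + 1 := fun l => by
    have : (0 : ℝ) ≤ j + l := by positivity
    linarith
  have hintegrand : ∀ x ∈ Set.Ioi (0 : ℝ),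
      x ^ j * (∑ l ∈ s, c l * x ^ l) * x ^ a * Real.exp (-x)
        = ∑ l ∈ s, c l * (Real.exp (-x) * x ^ (a + j + l + 1 - 1)) := fun x hx => by
    rw [mul_sum, sum_mul, sum_mul]
    refine sum_congr rfl fun l _ => ?_
    rw [show a + j + l + 1 - 1 = a + (j + l : ℕ) by push_cast; ring, Real.rpow_add hx,
      Real.rpow_natCast, pow_add]
    ring
  rw [setIntegral_congr_fun measurableSet_Ioi hintegrand,
    integral_finsetSum _ fun l _ => (Real.GammaIntegral_convergent (hpos l)).const_mul _]
  exact sum_congr rfl fun l _ => by rw [integral_const_mul, ← Real.Gamma_eq_integral (hpos l)]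

section Nodes

variable {ι : Type*}

def node (α : ι → ℝ) (σ : Σ _ : ι, ℕ) : ℝ := α σ.1 + σ.2

lemma node_injective {α : ι → ℝ} (hαint : ∀ i j, i ≠ j → ∀ z : ℤ, α i - α j ≠ z) :
    Function.Injective (node α) := by
  rintro ⟨i, m⟩ ⟨k, j⟩ h
  simp only [node] at h
  obtain rfl | hik := eq_or_ne i k
  · simp_all
  · exact absurd (by push_cast; linarith) (hαint i k hik (j - m))

variable [Fintype ι]

def nodeIndex (n : ι → ℕ) : Finset (Σ _ : ι, ℕ) := univ.sigma fun i => range (n i)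

lemma card_nodeIndex (n : ι → ℕ) : #(nodeIndex n) = ∑ i, n i := by
  simp [nodeIndex]

lemma sum_nodeIndex {M : Type*} [AddCommMonoid M] (n : ι → ℕ) (f : (Σ _ : ι, ℕ) → M) :
    ∑ σ ∈ nodeIndex n, f σ = ∑ i, ∑ m ∈ range (n i), f ⟨i, m⟩ :=
  sum_sigma _ _ _

variable [DecidableEq ι]

/-- The coefficient of `x ^ l` in `L^{(i)}`, with `|n⃗| = ∑ k, n k`. -/
noncomputable def typeICoeff (n : ι → ℕ) (α : ι → ℝ) (i : ι) (l : ℕ) : ℝ :=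
  (-1) ^ (∑ k, n k - 1) /
      ((n i - 1)! * (∏ k ∈ univ.erase i, poch (α k - α i) (n k)) * Real.Gamma (α i + 1)) *
    ((poch (-(n i : ℝ) + 1) l * ∏ k ∈ univ.erase i, poch (α i + 1 - α k - n k) l) /
      (poch (α i + 1) l * ∏ k ∈ univ.erase i, poch (α i + 1 - α k) l)) / l !

lemma typeICoeff_mul_Gamma {n : ι → ℕ} {α : ι → ℝ} {i : ι} (hαi : -1 < α i)
    (hαint : ∀ i j, i ≠ j → ∀ z : ℤ, α i - α j ≠ z) {m : ℕ} (hm : m < n i) :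
    typeICoeff n α i m * Real.Gamma (α i + m + 1)
      = (∏ τ ∈ (nodeIndex n).erase ⟨i, m⟩, (node α ⟨i, m⟩ - node α τ))⁻¹ := by
  simp only [nodeIndex, prod_sigma_erase _ (mem_univ i), node, add_sub_add_left_eq_sub]
  rw [mul_inv, ← neg_one_pow_mul_poch_div_factorial hm, ← prod_inv_distrib,
    prod_congr rfl fun k hk =>
      (neg_one_pow_mul_poch_div_poch_mul_poch (hαint i k (ne_of_mem_erase hk).symm) (n k) m).symm]
  rw [prod_div_distrib, prod_mul_distrib, prod_mul_distrib, prod_pow_eq_pow_sum]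
  have hsign : (-1 : ℝ) ^ (∑ k, n k - 1)
      = (-1) ^ (n i - 1) * (-1) ^ ∑ k ∈ univ.erase i, n k := by
    rw [← pow_add, ← add_sum_erase univ n (mem_univ i)]
    congr 1; omega
  have hαi1 : 0 < α i + 1 := by linarith
  have hGamma : Real.Gamma (α i + m + 1) = poch (α i + 1) m * Real.Gamma (α i + 1) := by
    rw [add_right_comm, Real.Gamma_add_natCast hαi1]
  have hG := (Real.Gamma_pos_of_pos hαi1).ne'
  have hb := (poch_pos hαi1 m).ne'
  rw [typeICoeff, hsign, hGamma]
  field_simp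

lemma sum_integral_pow_mul_typeI_eq_coeff {n : ι → ℕ} {α : ι → ℝ} (hα : ∀ i, -1 < α i)
    (hαint : ∀ i j, i ≠ j → ∀ z : ℤ, α i - α j ≠ z) {j : ℕ} (hj : j < ∑ i, n i) :
    ∑ i, ∫ x in Set.Ioi 0,
        x ^ j * (∑ l ∈ range (n i), typeICoeff n α i l * x ^ l) * x ^ α i * Real.exp (-x)
      = ((ascPochhammer ℝ j).comp (X + C 1)).coeff (∑ i, n i - 1) := by
  have hdeg : ((ascPochhammer ℝ j).comp (X + C 1)).degree < #(nodeIndex n) := by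
    rw [card_nodeIndex, ← natDegree_lt_iff_degree_lt (monic_ascPochhammer_comp_X_add_one j).ne_zero,
      natDegree_ascPochhammer_comp_X_add_one]
    exact hj
  rw [← card_nodeIndex, Lagrange.coeff_eq_sum (node_injective hαint).injOn hdeg, sum_nodeIndex]
  refine sum_congr rfl fun i _ => ?_
  rw [integral_pow_mul_sum_mul_rpow_mul_exp (hα i)]
  refine sum_congr rfl fun m hm => ?_
  have hpos : 0 < α i + m + 1 := by linarith [hα i, (Nat.cast_nonneg m : (0 : ℝ) ≤ m)]
  rw [div_eq_mul_inv, ← typeICoeff_mul_Gamma (hα i) hαint (mem_range.1 hm),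
    eval_ascPochhammer_comp_X_add_one, node, show α i + j + m + 1 = α i + m + 1 + j by ring,
    Real.Gamma_add_natCast hpos]
  ring

end Nodes

/-- The explicit hypergeometric polynomials `L^{(i)}` satisfy the type I orthogonality
conditions for the multiple Laguerre polynomials of the first kind. -/
theorem laguerreI_typeI_orthogonality
    (p : ℕ) (hp : 0 < p) (n : Fin p → ℕ) (hn : ∀ i, 0 < n i)
    (S : ℕ) (hS : S = ∑ i, n i)
    (α : Fin p → ℝ) (hα : ∀ i, -1 < α i)
    (hαint : ∀ i j, i ≠ j → ∀ z : ℤ, α i - α j ≠ (z : ℝ))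
    (L : Fin p → ℝ → ℝ)
    (hL : ∀ i x, L i x =
      ((-1 : ℝ) ^ (S - 1) /
        ((Nat.factorial (n i - 1) : ℝ) *
          (∏ k ∈ univ.erase i, poch (α k - α i) (n k)) *
          Real.Gamma (α i + 1))) *
      ∑ l ∈ range (n i),
        (poch (-(n i : ℝ) + 1) l * ∏ k ∈ univ.erase i, poch (α i + 1 - α k - n k) l) /
            (poch (α i + 1) l * ∏ k ∈ univ.erase i, poch (α i + 1 - α k) l) *
          x ^ l / (Nat.factorial l : ℝ)) :
    (∀ j < S - 1,
      ∑ i, ∫ x in Set.Ioi (0 : ℝ),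
        x ^ j * L i x * x ^ α i * Real.exp (-x) = 0) ∧
    ∑ i, ∫ x in Set.Ioi (0 : ℝ),
      x ^ (S - 1) * L i x * x ^ α i * Real.exp (-x) = 1 := by
  subst hS
  have hSpos : 1 ≤ ∑ i, n i :=
    (hn ⟨0, hp⟩).trans_le (single_le_sum (fun _ _ => Nat.zero_le _) (mem_univ _))
  have hL' : ∀ i x, L i x = ∑ l ∈ range (n i), typeICoeff n α i l * x ^ l := fun i x => by
    rw [hL, mul_sum]
    exact sum_congr rfl fun l _ => by rw [typeICoeff]; ring
  simp only [hL']
  refine ⟨fun j hj => ?_, ?_⟩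
  · rw [sum_integral_pow_mul_typeI_eq_coeff hα hαint (by omega)]
    exact coeff_eq_zero_of_natDegree_lt (by rw [natDegree_ascPochhammer_comp_X_add_one]; omega)
  · rw [sum_integral_pow_mul_typeI_eq_coeff hα hαint (by omega)]
    have hmonic := (monic_ascPochhammer_comp_X_add_one (∑ i, n i - 1)).coeff_natDegree
    rwa [natDegree_ascPochhammer_comp_X_add_one] at hmonic
end

section
/- Let c ∈ ℝ and r > 0 be such that c − r > −1 and |α_i + k − c| < r for every i ∈ {1,…,p} and k ∈ {0,…,n_i−1}, and let φ : ℂ → ℂ be analytic on the closed disc {t : |t−c| ≤ r} with φ(α_i+k) ≠ 0 for all such i, k. Given complex polynomials A_1,…,A_p with deg A_i ≤ n_i − 1, there exists a unique complex polynomial q with deg q ≤ |n⃗| − 1 such that for every real x ≥ 0: ∑_{i=1}^p A_i(x) Γ(x+α_i+1) = (2πi)^{−1} ∮_{|t−c|=r} q(t) φ(t) Γ(x+t+1) / ∏_{i=1}^p (α_i − t)_{n_i} dt. -/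
open Finset

/-- The Pochhammer symbol (rising factorial) `(a)_m` for a complex number `a`. -/
noncomputable def pochC (a : ℂ) (m : ℕ) : ℂ := (ascPochhammer ℂ m).eval a

/-!
Partial fractions and the Cauchy integral formula evaluate the contour integral as a sum of
residues `∑ q(z) w_z Γ(x + z + 1)` over the zeros `z = αᵢ + k` of the denominator, with weights
`w_z ≠ 0` because `φ(z) ≠ 0`. As `Γ(x + αᵢ + k + 1) = (x + αᵢ + 1)_k Γ(x + αᵢ + 1)`, this is again a
type I form `∑ Bᵢ(x) Γ(x + αᵢ + 1)`, with `Bᵢ` written in the basis `(x + αᵢ + 1)_k`.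

A type I form determines its polynomials: if `∑ Pᵢ(s) Γ(s + αᵢ + 1)` vanishes for `s ≥ 0`, it
vanishes on the slit plane by analytic continuation, and since `αᵢ - αⱼ ∉ ℤ` the poles of the different
Gamma factors are disjoint, so `Pᵢ` vanishes at every pole `-αᵢ - 1 - k` of its own factor.
Hence the identity holds exactly when `q(αᵢ + k) = a_{ik} / w_{ik}`, where `a_{ik}` are the
coefficients of `Aᵢ` in the basis `(x + αᵢ + 1)_k`, and Lagrange interpolation at the `|n|` nodes
gives exactly one such `q` of degree `< |n|`.
-/

open Polynomial Filter Topology Metric Complex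

namespace Polynomial.Sequence

variable {R : Type*} [CommRing R]

theorem exists_sum_smul_eq (S : Sequence R) {m : ℕ} (hS : ∀ k < m, (S k).Monic) {P : R[X]}
    (hP : P.degree < m) : ∃ b : Fin m → R, ∑ k, b k • S k = P := by
  have hspan : P ∈ Submodule.span R (S '' Set.Iio m) :=
    (S.span_degreeLT fun k hk ↦ (hS k hk).leadingCoeff.symm ▸ isUnit_one).symm ▸
      mem_degreeLT.mpr hP
  rwa [← Fin.range_val, ← Set.range_comp, Submodule.mem_span_range_iff_exists_fun] at hspan

variable [IsDomain R]

noncomputable def shiftedAscPochhammer (a : R) : Sequence R where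
  elems' k := (ascPochhammer R k).comp (X + C a)
  degree_eq' k := by
    rw [degree_eq_natDegree ((monic_ascPochhammer R k).comp_X_add_C a).ne_zero, natDegree_comp,
      ascPochhammer_natDegree, natDegree_X_add_C, mul_one]

theorem shiftedAscPochhammer_monic (a : R) (k : ℕ) : (shiftedAscPochhammer a k).Monic :=
  (monic_ascPochhammer R k).comp_X_add_C a

theorem eval_shiftedAscPochhammer (a t : R) (k : ℕ) :
    (shiftedAscPochhammer a k).eval t = (ascPochhammer R k).eval (t + a) := by
  simp [shiftedAscPochhammer, eval_comp]

end Polynomial.Sequence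

namespace Lagrange

variable {F ι : Type*} [Field F] [DecidableEq ι]

theorem inv_eval_nodal {s : Finset ι} {v : ι → F} (hvs : Set.InjOn v s) (hs : s.Nonempty)
    {x : F} (hx : ∀ i ∈ s, x ≠ v i) :
    ((nodal s v).eval x)⁻¹ = ∑ i ∈ s, nodalWeight s v i * (x - v i)⁻¹ := by
  have h := eval_interpolate_not_at_node 1 hx
  simp only [interpolate_one hvs hs, eval_one, Pi.one_apply, mul_one] at h
  exact inv_eq_of_mul_eq_one_right h.symm

theorem existsUnique_degree_lt_eval_eq [Fintype ι] {v : ι → F} (hv : Function.Injective v)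
    (r : ι → F) : ∃! q : F[X], q.degree < Fintype.card ι ∧ ∀ i, q.eval (v i) = r i := by
  have hvs : Set.InjOn v (univ : Finset ι) := hv.injOn
  rw [← card_univ]
  exact ⟨interpolate univ v r, ⟨degree_interpolate_lt r hvs, fun i ↦
    eval_interpolate_at_node r hvs (mem_univ i)⟩, fun q ⟨hq, hqr⟩ ↦
    eq_interpolate_of_eval_eq r hvs hq fun i _ ↦ hqr i⟩

end Lagrange

open Lagrange in
theorem circleIntegral_div_eval_nodal {ι : Type*} [DecidableEq ι] {s : Finset ι} {v : ι → ℂ}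
    (hvs : Set.InjOn v s) (hs : s.Nonempty) {c : ℂ} {R : ℝ} (hv : ∀ i ∈ s, v i ∈ ball c R)
    {f : ℂ → ℂ} (hf : DifferentiableOn ℂ f (closedBall c R)) :
    (∮ z in C(c, R), f z / (nodal s v).eval z) =
      2 * Real.pi * Complex.I * ∑ i ∈ s, nodalWeight s v i * f (v i) := by
  obtain ⟨i₀, hi₀⟩ := hs
  have hR : 0 ≤ R := (pos_of_mem_ball (hv i₀ hi₀)).le
  have hne : ∀ z ∈ sphere c R, ∀ i ∈ s, z ≠ v i := fun z hz i hi h ↦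
    (mem_sphere.mp hz ▸ mem_ball.mp (h ▸ hv i hi)).false
  have hpf : Set.EqOn (fun z ↦ f z / (nodal s v).eval z)
      (fun z ↦ ∑ i ∈ s, nodalWeight s v i * ((z - v i)⁻¹ • f z)) (sphere c R) := fun z hz ↦ by
    simp only [div_eq_mul_inv, inv_eval_nodal hvs ⟨i₀, hi₀⟩ (hne z hz), mul_sum, smul_eq_mul]
    exact sum_congr rfl fun i _ ↦ by ring
  have hint : ∀ i ∈ s, CircleIntegrable (fun z ↦ nodalWeight s v i * ((z - v i)⁻¹ • f z)) c R :=
    fun i hi ↦ ContinuousOn.circleIntegrable hR <| continuousOn_const.mul <|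
      ((continuousOn_id.sub continuousOn_const).inv₀ fun z hz ↦
        sub_ne_zero.mpr (hne z hz i hi)).smul
        (hf.continuousOn.mono sphere_subset_closedBall)
  rw [circleIntegral.integral_congr hR hpf, circleIntegral.integral_fun_sum hint, mul_sum]
  refine sum_congr rfl fun i hi ↦ ?_
  rw [circleIntegral.integral_const_mul, hf.circleIntegral_sub_inv_smul (hv i hi), smul_eq_mul]
  ring

namespace Complex

theorem ne_neg_natCast_of_mem_slitPlane {z : ℂ} (hz : z ∈ slitPlane) (m : ℕ) : z ≠ -m := by
  rintro rfl
  exact (Nat.cast_nonneg m).not_gt (neg_ofReal_mem_slitPlane.mp (by exact_mod_cast hz))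

theorem add_ofReal_mem_slitPlane {s : ℂ} (hs : s ∈ slitPlane) {b : ℝ} (hb : 0 ≤ b) :
    s + b ∈ slitPlane := by
  rcases hs with hs | hs
  · exact Or.inl (by simp only [add_re, ofReal_re]; linarith)
  · exact Or.inr (by simpa using hs)

theorem Gamma_add_nat_eq_mul_ascPochhammer {z : ℂ} (hz : ∀ m : ℕ, z ≠ -m) (k : ℕ) :
    Gamma (z + k) = Gamma z * (ascPochhammer ℂ k).eval z := by
  rw [← Gamma_add_nat_div_Gamma_eq z hz, mul_div_cancel₀ _ (Gamma_ne_zero hz)]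

end Complex

section GammaIndependence

variable {ι : Type*} [Fintype ι] {β : ι → ℝ} {P : ι → ℂ[X]}

theorem sum_eval_mul_Gamma_eqOn_zero (hβ : ∀ i, 0 < β i)
    (h : ∀ x : ℝ, 0 < x → ∑ i, (P i).eval (x : ℂ) * Gamma (x + β i) = 0) :
    Set.EqOn (fun s ↦ ∑ i, (P i).eval s * Gamma (s + β i)) 0 slitPlane := by
  have hdiff : DifferentiableOn ℂ (fun s ↦ ∑ i, (P i).eval s * Gamma (s + β i)) slitPlane :=
    fun s hs ↦ DifferentiableAt.differentiableWithinAt <| DifferentiableAt.fun_sum fun i _ ↦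
      (P i).differentiableAt.mul <| (differentiableAt_Gamma _ <| ne_neg_natCast_of_mem_slitPlane <|
        add_ofReal_mem_slitPlane hs (hβ i).le).comp s (differentiableAt_id.add_const _)
  have hone : (1 : ℂ) ∈ slitPlane := one_mem_slitPlane
  refine (hdiff.analyticOnNhd isOpen_slitPlane).eqOn_zero_of_preconnected_of_frequently_eq_zero
    (starConvex_one_slitPlane.isPathConnected hone).isConnected.isPreconnected hone ?_
  have hreal : Tendsto ((↑) : ℝ → ℂ) (𝓝[≠] 1) (𝓝[≠] 1) := by
    simpa using continuous_ofReal.continuousWithinAt.tendsto_nhdsWithin (x := 1)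
      (s := {(1 : ℝ)}ᶜ) (t := {(1 : ℂ)}ᶜ) fun x hx ↦ by simpa using hx
  refine hreal.frequently (Eventually.frequently ?_)
  filter_upwards [nhdsWithin_le_nhds (lt_mem_nhds one_pos)] with x hx using h x hx

theorem eval_neg_sub_natCast_eq_zero [DecidableEq ι] (hβ : ∀ i, 0 < β i)
    (hβint : ∀ i j, i ≠ j → ∀ m : ℤ, β i - β j ≠ m)
    (h : ∀ x : ℝ, 0 < x → ∑ i, (P i).eval (x : ℂ) * Gamma (x + β i) = 0) (i : ι) (k : ℕ) :
    (P i).eval (-(β i : ℂ) - k) = 0 := by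
  set x₀ : ℂ := -(β i) - k
  set R : ℂ → ℂ := fun s ↦ ∑ j ∈ univ.erase i, (P j).eval s * Gamma (s + β j)
  -- On the upper half-plane `E s = (s - x₀) (s + β i)_k ∑ⱼ Pⱼ(s) Γ(s + βⱼ) = 0`, while `E` is
  -- holomorphic at the pole `x₀` of `Γ(s + β i)`, where it takes the value `Pᵢ(x₀)`.
  set E : ℂ → ℂ := fun s ↦ (P i).eval s * Gamma (s + β i + (k + 1 : ℕ)) +
    (s - x₀) * (ascPochhammer ℂ k).eval (s + β i) * R s
  have hR : DifferentiableAt ℂ R x₀ := by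
    refine DifferentiableAt.fun_sum fun j hj ↦ (P j).differentiableAt.mul ?_
    refine (differentiableAt_Gamma _ fun m hm ↦ ?_).comp x₀ (differentiableAt_id.add_const _)
    apply hβint i j (ne_of_mem_erase hj).symm (m - k)
    have := congrArg re hm
    simp only [add_re, sub_re, neg_re, ofReal_re, natCast_re, x₀] at this
    push_cast
    linarith
  have h1 : x₀ + β i + (k + 1 : ℕ) = 1 := by simp only [Nat.cast_add, Nat.cast_one, x₀]; ring
  have hE : DifferentiableAt ℂ E x₀ := by
    refine ((P i).differentiableAt.mul ?_).add (DifferentiableAt.mul (by fun_prop) hR)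
    refine (differentiableAt_Gamma _ ?_).comp x₀ (f := fun s : ℂ ↦ s + β i + ((k + 1 : ℕ) : ℂ))
      (by fun_prop)
    rw [h1]
    exact ne_neg_natCast_of_mem_slitPlane one_mem_slitPlane
  have hmaps : Set.MapsTo E {s | 0 < s.im} {0} := by
    intro s (hs : 0 < s.im)
    have hu : s + β i ∈ slitPlane := Or.inr (by simpa using hs.ne')
    have hsum := sum_eval_mul_Gamma_eqOn_zero hβ h (Or.inr hs.ne' : s ∈ slitPlane)
    simp only [Pi.zero_apply, ← add_sum_erase _ _ (mem_univ i)] at hsum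
    have hΓ := Gamma_add_nat_eq_mul_ascPochhammer (ne_neg_natCast_of_mem_slitPlane hu) (k + 1)
    rw [ascPochhammer_succ_eval] at hΓ
    simp only [Set.mem_singleton_iff, E, R, hΓ, x₀]
    linear_combination ((s + β i + k) * (ascPochhammer ℂ k).eval (s + β i)) * hsum
  have hx₀ : x₀ ∈ closure {s : ℂ | 0 < s.im} := by simp [x₀]
  have := hE.continuousAt.continuousWithinAt.mem_closure hx₀ hmaps
  simpa only [E, h1, Gamma_one, mul_one, sub_self, zero_mul, add_zero, closure_singleton,
    Set.mem_singleton_iff] using this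

theorem eq_zero_of_forall_sum_eval_mul_Gamma_eq_zero [DecidableEq ι] (hβ : ∀ i, 0 < β i)
    (hβint : ∀ i j, i ≠ j → ∀ m : ℤ, β i - β j ≠ m)
    (h : ∀ x : ℝ, 0 < x → ∑ i, (P i).eval (x : ℂ) * Gamma (x + β i) = 0) (i : ι) : P i = 0 :=
  (P i).eq_zero_of_infinite_isRoot <| Set.infinite_of_injective_forall_mem
    (f := fun k : ℕ ↦ -(β i : ℂ) - k) (fun a b hab ↦ by simpa using hab)
    (eval_neg_sub_natCast_eq_zero hβ hβint h i)

end GammaIndependence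

theorem Polynomial.natDegree_le_sub_one_iff_degree_lt {R : Type*} [Semiring R] {p : R[X]} {m : ℕ}
    (hm : 0 < m) : p.natDegree ≤ m - 1 ↔ p.degree < m := by
  rcases eq_or_ne p 0 with rfl | hp
  · simp
  · rw [← natDegree_lt_iff_degree_lt hp]
    omega

theorem Fintype.card_sigma_fin {ι : Type*} [Fintype ι] (n : ι → ℕ) :
    Fintype.card (Σ i, Fin (n i)) = ∑ i, n i := by
  simp [Fintype.card_sigma]

theorem pochC_eq_prod (a : ℂ) (m : ℕ) : pochC a m = ∏ k : Fin m, (a + k) := by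
  rw [pochC, Fin.prod_univ_eq_prod_range (fun k ↦ a + k)]
  induction m with
  | zero => simp
  | succ m ih => rw [ascPochhammer_succ_eval, prod_range_succ, ih]

def pochNodes {ι : Type*} (α : ι → ℝ) (n : ι → ℕ) (σ : Σ i, Fin (n i)) : ℂ := α σ.1 + σ.2

section PochhammerNodes

variable {ι : Type*} {α : ι → ℝ} {n : ι → ℕ}

theorem pochNodes_injective (hαint : ∀ i j, i ≠ j → ∀ z : ℤ, α i - α j ≠ z) :
    Function.Injective (pochNodes α n) := by
  rintro ⟨i, k⟩ ⟨j, l⟩ h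
  have h' : α i + k = α j + l := by simpa [pochNodes] using congrArg re h
  by_cases hij : i = j
  · subst hij
    obtain rfl : k = l := Fin.ext (by exact_mod_cast (add_left_cancel h' : (k : ℝ) = l))
    rfl
  · exact absurd (by push_cast; linarith) (hαint i j hij (l - k))

theorem pochNodes_mem_ball {c r : ℝ} (henc : ∀ i, ∀ k < n i, |α i + k - c| < r)
    (σ : Σ i, Fin (n i)) : pochNodes α n σ ∈ ball (c : ℂ) r := by
  have h : pochNodes α n σ - c = ((α σ.1 + σ.2 - c : ℝ) : ℂ) := by simp [pochNodes]
  rw [mem_ball, dist_eq, h, norm_real, Real.norm_eq_abs]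
  exact henc σ.1 σ.2 σ.2.isLt

variable [Fintype ι]

variable (α n) in
theorem prod_pochC_sub_eq (t : ℂ) :
    ∏ i, pochC (α i - t) (n i) =
      (-1) ^ (∑ i, n i) * (Lagrange.nodal univ (pochNodes α n)).eval t := by
  rw [Lagrange.eval_nodal, ← Fintype.card_sigma_fin, ← card_univ, ← prod_const, ← prod_mul_distrib,
    Fintype.prod_sigma]
  refine prod_congr rfl fun i _ ↦ ?_
  rw [pochC_eq_prod]
  refine prod_congr rfl fun k _ ↦ ?_
  simp only [pochNodes]
  ring

open Lagrange in
theorem two_pi_I_inv_mul_circleIntegral_div_prod_pochC [DecidableEq ι]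
    [Nonempty (Σ i, Fin (n i))] (hinj : Function.Injective (pochNodes α n)) {c : ℂ} {r : ℝ}
    (hball : ∀ σ, pochNodes α n σ ∈ ball c r) {f : ℂ → ℂ}
    (hf : DifferentiableOn ℂ f (closedBall c r)) :
    (2 * Real.pi * I)⁻¹ * (∮ t in C(c, r), f t / ∏ i, pochC (α i - t) (n i)) =
      ∑ σ, (-1) ^ (∑ i, n i) * nodalWeight univ (pochNodes α n) σ * f (pochNodes α n σ) := by
  have hsign : ((-1 : ℂ) ^ (∑ i, n i))⁻¹ = (-1) ^ (∑ i, n i) := by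
    rw [← inv_pow, inv_neg_one]
  have hintegrand : (fun t ↦ f t / ∏ i, pochC (α i - t) (n i)) =
      fun t ↦ (-1) ^ (∑ i, n i) * (f t / (nodal univ (pochNodes α n)).eval t) := by
    ext t
    rw [prod_pochC_sub_eq, div_mul_eq_div_div_swap, div_eq_mul_inv _ ((-1 : ℂ) ^ _), hsign,
      mul_comm]
  rw [hintegrand, circleIntegral.integral_const_mul, circleIntegral_div_eval_nodal hinj.injOn
    univ_nonempty (fun σ _ ↦ hball σ) hf, mul_left_comm, inv_mul_cancel_left₀ two_pi_I_ne_zero,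
    mul_sum]
  simp_rw [mul_assoc]

theorem sum_mul_Gamma_add_pochNodes (hα : ∀ i, -1 < α i) (w : (Σ i, Fin (n i)) → ℂ) {x : ℝ}
    (hx : 0 ≤ x) :
    ∑ σ, w σ * Gamma (x + pochNodes α n σ + 1) = ∑ i,
      (∑ k, w ⟨i, k⟩ • Sequence.shiftedAscPochhammer ((α i : ℂ) + 1) k).eval (x : ℂ) *
        Gamma (x + α i + 1) := by
  rw [Fintype.sum_sigma]
  refine sum_congr rfl fun i _ ↦ ?_
  have hpos : (0 : ℝ) < ((x : ℂ) + α i + 1).re := by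
    simp only [add_re, ofReal_re, one_re]; linarith [hα i]
  simp only [eval_finsetSum, eval_smul, Sequence.eval_shiftedAscPochhammer, smul_eq_mul, sum_mul]
  refine sum_congr rfl fun k _ ↦ ?_
  have h := Gamma_add_nat_eq_mul_ascPochhammer
    (ne_neg_natCast_of_mem_slitPlane (Or.inl hpos : _ ∈ slitPlane)) k
  rw [show (x : ℂ) + pochNodes α n ⟨i, k⟩ + 1 = x + α i + 1 + k by simp only [pochNodes]; ring, h,
    show (x : ℂ) + (α i + 1) = x + α i + 1 by ring]
  ring

theorem forall_sum_eval_mul_Gamma_eq_iff [DecidableEq ι] (hα : ∀ i, -1 < α i)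
    (hαint : ∀ i j, i ≠ j → ∀ z : ℤ, α i - α j ≠ z) (a : ∀ i, Fin (n i) → ℂ)
    (w : (Σ i, Fin (n i)) → ℂ) :
    (∀ x : ℝ, 0 ≤ x → ∑ i,
        (∑ k, a i k • Sequence.shiftedAscPochhammer ((α i : ℂ) + 1) k).eval (x : ℂ) *
          Gamma (x + α i + 1) = ∑ σ, w σ * Gamma (x + pochNodes α n σ + 1)) ↔
      ∀ σ, w σ = a σ.1 σ.2 := by
  refine ⟨fun h ↦ ?_, fun h x hx ↦ by simp_rw [h, sum_mul_Gamma_add_pochNodes hα _ hx]⟩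
  have hzero : ∀ i, ∑ k, (a i k - w ⟨i, k⟩) •
      Sequence.shiftedAscPochhammer ((α i : ℂ) + 1) k = 0 := by
    refine eq_zero_of_forall_sum_eval_mul_Gamma_eq_zero (β := fun i ↦ α i + 1)
      (fun i ↦ by linarith [hα i]) (fun i j hij m ↦ by simpa using hαint i j hij m) fun x hx ↦ ?_
    have hx' := h x hx.le
    rw [sum_mul_Gamma_add_pochNodes hα w hx.le, ← sub_eq_zero, ← sum_sub_distrib] at hx'
    rw [← hx']
    refine sum_congr rfl fun i _ ↦ ?_
    simp only [sub_smul, sum_sub_distrib, eval_sub, sub_mul]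
    push_cast
    ring_nf
  rintro ⟨i, k⟩
  exact (sub_eq_zero.mp (Fintype.linearIndependent_iff.mp
    ((Sequence.linearIndependent _).comp _ Fin.val_injective) _ (hzero i) k)).symm

theorem differentiableOn_Gamma_add_one_closedBall {c r : ℝ} (hcr : -1 < c - r) {x : ℝ}
    (hx : 0 ≤ x) : DifferentiableOn ℂ (fun t ↦ Gamma (x + t + 1)) (closedBall (c : ℂ) r) := by
  intro t ht
  have hre : c - r ≤ t.re := by
    have h := (abs_re_le_norm (t - c)).trans (mem_closedBall_iff_norm.mp ht)
    simp only [sub_re, ofReal_re] at h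
    linarith [neg_abs_le (t.re - c)]
  have hslit : (x : ℂ) + t + 1 ∈ slitPlane :=
    Or.inl (by simp only [add_re, ofReal_re, one_re]; linarith)
  exact ((differentiableAt_Gamma _ (ne_neg_natCast_of_mem_slitPlane hslit)).comp t
    (by fun_prop)).differentiableWithinAt

theorem forall_sum_eval_mul_Gamma_eq_circleIntegral_iff [DecidableEq ι]
    [Nonempty (Σ i, Fin (n i))] (hα : ∀ i, -1 < α i)
    (hαint : ∀ i j, i ≠ j → ∀ z : ℤ, α i - α j ≠ z) {c r : ℝ} (hcr : -1 < c - r)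
    (henc : ∀ i, ∀ k < n i, |α i + k - c| < r) {φ : ℂ → ℂ}
    (hφ : DifferentiableOn ℂ φ (closedBall (c : ℂ) r)) (hφne : ∀ σ, φ (pochNodes α n σ) ≠ 0)
    (a : ∀ i, Fin (n i) → ℂ) (q : ℂ[X]) :
    (∀ x : ℝ, 0 ≤ x → ∑ i,
        (∑ k, a i k • Sequence.shiftedAscPochhammer ((α i : ℂ) + 1) k).eval (x : ℂ) *
          Gamma (x + α i + 1) = (2 * Real.pi * I)⁻¹ * circleIntegral
            (fun t ↦ q.eval t * φ t * Gamma (x + t + 1) / ∏ i, pochC (α i - t) (n i)) c r) ↔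
      ∀ σ, q.eval (pochNodes α n σ) = a σ.1 σ.2 / ((-1) ^ (∑ i, n i) *
        Lagrange.nodalWeight univ (pochNodes α n) σ * φ (pochNodes α n σ)) := by
  have hinj := pochNodes_injective (n := n) hαint
  have hres : ∀ x : ℝ, 0 ≤ x → (2 * Real.pi * I)⁻¹ * circleIntegral
      (fun t ↦ q.eval t * φ t * Gamma (x + t + 1) / ∏ i, pochC (α i - t) (n i)) c r =
      ∑ σ, (q.eval (pochNodes α n σ) * ((-1) ^ (∑ i, n i) *
        Lagrange.nodalWeight univ (pochNodes α n) σ * φ (pochNodes α n σ))) *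
          Gamma (x + pochNodes α n σ + 1) := fun x hx ↦ by
    rw [two_pi_I_inv_mul_circleIntegral_div_prod_pochC hinj (pochNodes_mem_ball henc)
      (f := fun t ↦ q.eval t * φ t * Gamma (x + t + 1))
      ((q.differentiable.differentiableOn.mul hφ).mul
        (differentiableOn_Gamma_add_one_closedBall hcr hx))]
    exact sum_congr rfl fun σ _ ↦ by ring
  have hw : ∀ σ, (-1) ^ (∑ i, n i) * Lagrange.nodalWeight univ (pochNodes α n) σ *
      φ (pochNodes α n σ) ≠ 0 := fun σ ↦ mul_ne_zero (mul_ne_zero (pow_ne_zero _ (by norm_num))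
    (Lagrange.nodalWeight_ne_zero hinj.injOn (mem_univ σ))) (hφne σ)
  rw [forall₂_congr fun x hx ↦ by rw [hres x hx], forall_sum_eval_mul_Gamma_eq_iff hα hαint]
  simp_rw [eq_div_iff (hw _)]

end PochhammerNodes

theorem discrete_typeI_contour_representation_general
    (p : ℕ) (hp : 0 < p) (n : Fin p → ℕ) (hn : ∀ i, 0 < n i)
    (S : ℕ) (hS : S = ∑ i, n i)
    (α : Fin p → ℝ) (hα : ∀ i, -1 < α i)
    (hαint : ∀ i j, i ≠ j → ∀ z : ℤ, α i - α j ≠ (z : ℝ))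
    (c r : ℝ) (hcr : -1 < c - r)
    (henc : ∀ i, ∀ k < n i, |α i + k - c| < r)
    (φ : ℂ → ℂ)
    (hφ : AnalyticOnNhd ℂ φ (Metric.closedBall (c : ℂ) r))
    (hφne : ∀ i, ∀ k < n i, φ ((α i : ℂ) + k) ≠ 0)
    (A : Fin p → Polynomial ℂ) (hA : ∀ i, (A i).natDegree ≤ n i - 1) :
    ∃! q : Polynomial ℂ, q.natDegree ≤ S - 1 ∧
      ∀ x : ℝ, 0 ≤ x →
        ∑ i, (A i).eval (x : ℂ) * Complex.Gamma ((x : ℂ) + α i + 1) =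
          (2 * Real.pi * Complex.I)⁻¹ *
            circleIntegral
              (fun t : ℂ => q.eval t * φ t * Complex.Gamma ((x : ℂ) + t + 1) /
                ∏ i, pochC ((α i : ℂ) - t) (n i))
              (c : ℂ) r := by
  have : Nonempty (Σ i, Fin (n i)) := ⟨⟨⟨0, hp⟩, ⟨0, hn _⟩⟩⟩
  have hS0 : 0 < S := hS ▸ sum_pos (fun i _ ↦ hn i) ⟨⟨0, hp⟩, mem_univ _⟩
  choose a ha using fun i ↦ Sequence.exists_sum_smul_eq _
    (fun k _ ↦ Sequence.shiftedAscPochhammer_monic ((α i : ℂ) + 1) k)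
    ((natDegree_le_sub_one_iff_degree_lt (hn i)).mp (hA i))
  simp_rw [natDegree_le_sub_one_iff_degree_lt hS0, ← ha,
    forall_sum_eval_mul_Gamma_eq_circleIntegral_iff hα hαint hcr henc hφ.differentiableOn
      (fun σ ↦ hφne σ.1 σ.2 σ.2.isLt), hS, ← Fintype.card_sigma_fin]
  exact Lagrange.existsUnique_degree_lt_eval_eq (pochNodes_injective hαint) _

/-- Any discrete type I linear form `∑ A_i(x) Γ(x+α_i+1)` has a unique contour-integral
representation `(2πi)⁻¹ ∮ q(t) φ(t) Γ(x+t+1) / ∏ (α_i − t)_{n_i} dt` with `deg q ≤ |n|−1`. -/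
theorem discrete_typeI_contour_representation
    (p : ℕ) (hp : 0 < p) (n : Fin p → ℕ) (hn : ∀ i, 0 < n i)
    (S : ℕ) (hS : S = ∑ i, n i)
    (α : Fin p → ℝ) (hα : ∀ i, -1 < α i)
    (hαint : ∀ i j, i ≠ j → ∀ z : ℤ, α i - α j ≠ (z : ℝ))
    (c r : ℝ) (hr : 0 < r) (hcr : -1 < c - r)
    (henc : ∀ i, ∀ k < n i, |α i + k - c| < r)
    (φ : ℂ → ℂ)
    (hφ : AnalyticOnNhd ℂ φ (Metric.closedBall (c : ℂ) r))
    (hφne : ∀ i, ∀ k < n i, φ ((α i : ℂ) + k) ≠ 0)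
    (A : Fin p → Polynomial ℂ) (hA : ∀ i, (A i).natDegree ≤ n i - 1) :
    ∃! q : Polynomial ℂ, q.natDegree ≤ S - 1 ∧
      ∀ x : ℝ, 0 ≤ x →
        ∑ i, (A i).eval (x : ℂ) * Complex.Gamma ((x : ℂ) + α i + 1) =
          (2 * Real.pi * Complex.I)⁻¹ *
            circleIntegral
              (fun t : ℂ => q.eval t * φ t * Complex.Gamma ((x : ℂ) + t + 1) /
                ∏ i, pochC ((α i : ℂ) - t) (n i))
              (c : ℂ) r :=
  discrete_typeI_contour_representation_general p hp n hn S hS α hα hαint c r hcr henc φ hφ hφne A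
    hA
end
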